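/- arXiv:1703.08616 — 5 statements merged into one kernel-verified Lean document; each statement's English description precedes it below -/
import Mathlib

section
/- If (a,b,c,d) is a root quadruple of a Descartes packing (a ≤ 0 ≤ b ≤ c ≤ d, a+b+c ≥ d, and (a+b+c+d)^2 = 2(a^2+b^2+c^2+d^2)) with b > 0, then S_2^perp applied to it, giving (2b+a, -b, 2b+c, 2b+d), is again a root quadruple after reordering: -b ≤ 0 ≤ 2b+a ≤ 2b+c ≤ 2b+d and (-b) + (2b+a) + (2b+c) ≥ 2b+d. -/
/-!
Solving the Descartes relation for `a` shows that `a` and `a' = 2(b+c+d) - a` are the two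
roots of a monic quadratic `f`. Evaluated at `-2b`, `f` is a sum of nonnegative terms, and
`-2b` lies left of the vertex `b+c+d`, so `-2b` is at most the smaller root; hence
`2b + a ≥ 0`. The remaining inequalities are the root conditions of `(a,b,c,d)`, shifted.
-/

variable {R : Type*} [CommRing R] [LinearOrder R] [IsStrictOrderedRing R]

theorem nonneg_of_mul_nonneg_of_add_nonneg {x y : R} (hxy : 0 ≤ x * y) (hsum : 0 ≤ x + y) :
    0 ≤ x := by
  by_contra! hx
  have hy : 0 < y := by linarith
  exact (mul_neg_of_neg_of_pos hx hy).not_ge hxy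

/-- `f(-2b) = (-2b - a)(-2b - a')` for the quadratic `f` with roots `a` and `a' = 2(b+c+d) - a`. -/
theorem descartes_eval_neg_two_mul {a b c d : R}
    (hDesc : (a + b + c + d) ^ 2 = 2 * (a ^ 2 + b ^ 2 + c ^ 2 + d ^ 2)) :
    (2 * b + a) * (2 * b + (2 * (b + c + d) - a)) = 9 * b ^ 2 + 2 * b * (c + d) + (c - d) ^ 2 := by
  linear_combination hDesc

theorem two_mul_add_nonneg_of_descartes {a b c d : R}
    (hDesc : (a + b + c + d) ^ 2 = 2 * (a ^ 2 + b ^ 2 + c ^ 2 + d ^ 2))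
    (hb : 0 ≤ b) (hc : 0 ≤ c) (hd : 0 ≤ d) : 0 ≤ 2 * b + a := by
  refine nonneg_of_mul_nonneg_of_add_nonneg (y := 2 * b + (2 * (b + c + d) - a)) ?_ (by linarith)
  rw [descartes_eval_neg_two_mul hDesc]
  positivity

theorem invert_root_quadruple_is_root_general (a b c d : ℤ)
    (hDesc : (a + b + c + d) ^ 2 = 2 * (a ^ 2 + b ^ 2 + c ^ 2 + d ^ 2))
    (ha : a ≤ 0) (hb : 0 ≤ b) (hbc : b ≤ c) (hcd : c ≤ d)
    (hroot : d ≤ a + b + c) :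
    -b ≤ 0 ∧ 0 ≤ 2 * b + a ∧ 2 * b + a ≤ 2 * b + c ∧ 2 * b + c ≤ 2 * b + d ∧
      2 * b + d ≤ (-b) + (2 * b + a) + (2 * b + c) :=
  ⟨by linarith, two_mul_add_nonneg_of_descartes hDesc hb (by linarith) (by linarith),
    by linarith, by linarith, by linarith⟩

theorem invert_root_quadruple_is_root (a b c d : ℤ)
    (hDesc : (a + b + c + d) ^ 2 = 2 * (a ^ 2 + b ^ 2 + c ^ 2 + d ^ 2))
    (ha : a ≤ 0) (hb : 0 ≤ b) (hbc : b ≤ c) (hcd : c ≤ d)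
    (hroot : d ≤ a + b + c) (hbpos : 0 < b) :
    -b ≤ 0 ∧ 0 ≤ 2 * b + a ∧ 2 * b + a ≤ 2 * b + c ∧ 2 * b + c ≤ 2 * b + d ∧
      2 * b + d ≤ (-b) + (2 * b + a) + (2 * b + c) :=
  invert_root_quadruple_is_root_general a b c d hDesc ha hb hbc hcd hroot
end

section
/- The 'reflective' Euclidean algorithm on integer pairs terminates: the dynamical system on Z^2 sending (p,q) to (-p,q) if p/q < 0, to (p, 2p-q) if 0 < p/q < 1, and to (2q-p, q) if p/q > 1, halting when p = q or p = 0 or q = 0, terminates in finitely many steps on any integer pair, and when it halts starting from (p,q) ≠ (0,0), the nonzero entries equal ±gcd(p,q). -/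
/-!
Reflecting `p ↦ -p` keeps `|p| + |q|` but makes the signs agree, and each of the two
reflections `q ↦ 2p - q`, `p ↦ 2q - p` strictly shrinks the larger of `|p|, |q|` when `p` and
`q` have the same sign. So `2 (|p| + |q|) + [pq < 0]` strictly decreases until the algorithm
halts. All three moves are unimodular, so `gcd(p, q)` is invariant, and at a halting pair
`(g, g)`, `(g, 0)` or `(0, g)` every nonzero entry is `±gcd`.
-/

/-- One step of the "reflective" Euclidean algorithm: `(p,q) ↦ (-p,q)` if `p/q < 0`,
`(p,q) ↦ (p, 2p-q)` if `0 < p/q < 1`, `(p,q) ↦ (2q-p, q)` if `p/q > 1`;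
halt when `p = q` or `p = 0` or `q = 0`. -/
def stepCF (pq : ℤ × ℤ) : ℤ × ℤ :=
  if pq.1 = pq.2 ∨ pq.1 = 0 ∨ pq.2 = 0 then pq
  else if (pq.1 : ℚ) / pq.2 < 0 then (-pq.1, pq.2)
  else if (pq.1 : ℚ) / pq.2 < 1 then (pq.1, 2 * pq.1 - pq.2)
  else (2 * pq.2 - pq.1, pq.2)

theorem Function.exists_iterate_of_measure_lt {α : Type*} (f : α → α) (μ : α → ℕ)
    (P : α → Prop) (hf : ∀ x, ¬P x → μ (f x) < μ x) (x : α) : ∃ n, P (f^[n] x) := by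
  induction x using (measure μ).wf.induction with
  | _ x ih =>
    by_cases hx : P x
    · exact ⟨0, hx⟩
    · obtain ⟨n, hn⟩ := ih (f x) (hf x hx)
      exact ⟨n + 1, by rwa [Function.iterate_succ_apply]⟩

namespace ReflectiveEuclid

def IsHalted (pq : ℤ × ℤ) : Prop :=
  pq.1 = pq.2 ∨ pq.1 = 0 ∨ pq.2 = 0

def potential (pq : ℤ × ℤ) : ℕ :=
  2 * (pq.1.natAbs + pq.2.natAbs) + if pq.1 * pq.2 < 0 then 1 else 0

theorem mul_ne_zero_of_not_isHalted {p q : ℤ} (h : ¬IsHalted (p, q)) : p * q ≠ 0 :=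
  mul_ne_zero (fun hp => h (Or.inr (Or.inl hp))) (fun hq => h (Or.inr (Or.inr hq)))

theorem stepCF_of_isHalted {pq : ℤ × ℤ} (h : IsHalted pq) : stepCF pq = pq :=
  if_pos h

theorem stepCF_of_not_isHalted {p q : ℤ} (h : ¬IsHalted (p, q)) :
    stepCF (p, q) =
      if p * q < 0 then (-p, q)
      else if p.natAbs < q.natAbs then (p, 2 * p - q)
      else (2 * q - p, q) := by
  have hdiv_neg : (p : ℚ) / q < 0 ↔ p * q < 0 := by
    rw [div_neg_iff, mul_neg_iff]
    simp only [Int.cast_pos, Int.cast_lt_zero]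
  have hdiv_lt_one (hpos : 0 < p * q) : (p : ℚ) / q < 1 ↔ p.natAbs < q.natAbs := by
    have hsign := mul_pos_iff.mp hpos
    rw [div_lt_one_iff]
    simp only [Int.cast_pos, Int.cast_lt, Int.cast_eq_zero, Int.cast_lt_zero]
    omega
  have hdisj : ¬(p = q ∨ p = 0 ∨ q = 0) := h
  simp only [stepCF, hdisj, if_false, hdiv_neg]
  by_cases hneg : p * q < 0
  · simp only [if_pos hneg]
  · have hpos : 0 < p * q := (not_lt.mp hneg).lt_of_ne' (mul_ne_zero_of_not_isHalted h)
    simp only [if_neg hneg, hdiv_lt_one hpos]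

theorem gcd_stepCF (pq : ℤ × ℤ) :
    Int.gcd (stepCF pq).1 (stepCF pq).2 = Int.gcd pq.1 pq.2 := by
  obtain ⟨p, q⟩ := pq
  by_cases h : IsHalted (p, q)
  · rw [stepCF_of_isHalted h]
  rw [stepCF_of_not_isHalted h]
  split_ifs
  · exact Int.neg_gcd
  · exact Int.gcd_mul_right_sub_right p q 2
  · exact Int.gcd_mul_right_sub_left q p 2

theorem potential_stepCF_lt {pq : ℤ × ℤ} (h : ¬IsHalted pq) : potential (stepCF pq) < potential pq := by
  obtain ⟨p, q⟩ := pq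
  rw [stepCF_of_not_isHalted h]
  rcases (mul_ne_zero_of_not_isHalted h).lt_or_gt with hneg | hpos
  · have : ¬-p * q < 0 := by nlinarith
    simp only [potential, if_pos hneg, if_neg this]
    omega
  · have hsign := mul_pos_iff.mp hpos
    have hpq : p ≠ q := fun e => h (Or.inl e)
    rw [if_neg hpos.not_gt]
    simp only [potential]
    split_ifs <;> omega

theorem natAbs_eq_gcd_of_isHalted {a b : ℤ} (h : IsHalted (a, b)) :
    (a ≠ 0 → a.natAbs = Int.gcd a b) ∧ (b ≠ 0 → b.natAbs = Int.gcd a b) := by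
  rcases h with h | h | h <;> simp only at h <;> subst h <;> simp [Int.gcd_self]

end ReflectiveEuclid

open ReflectiveEuclid in
theorem reflective_euclidean_terminates (p q : ℤ) :
    ∃ n : ℕ,
      ((stepCF^[n] (p, q)).1 = (stepCF^[n] (p, q)).2 ∨
        (stepCF^[n] (p, q)).1 = 0 ∨ (stepCF^[n] (p, q)).2 = 0) ∧
      ((p, q) ≠ (0, 0) →
        ((stepCF^[n] (p, q)).1 ≠ 0 →
          (stepCF^[n] (p, q)).1.natAbs = Int.gcd p q) ∧
        ((stepCF^[n] (p, q)).2 ≠ 0 →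
          (stepCF^[n] (p, q)).2.natAbs = Int.gcd p q)) := by
  obtain ⟨n, hn⟩ := Function.exists_iterate_of_measure_lt stepCF potential IsHalted
    (fun _ => potential_stepCF_lt) (p, q)
  have hgcd : Int.gcd (stepCF^[n] (p, q)).1 (stepCF^[n] (p, q)).2 = Int.gcd p q :=
    congrFun (Function.iterate_invariant (g := fun pq : ℤ × ℤ => Int.gcd pq.1 pq.2)
      (funext gcd_stepCF) n) (p, q)
  refine ⟨n, hn, fun _ => ?_⟩
  simpa only [hgcd] using natAbs_eq_gcd_of_isHalted hn
end

section
/- The infinite measure with density f(x) = 1/(-x) on (-∞,0), 1/(x(1-x)) on (0,1), and 1/(x-1) on (1,∞) is invariant under the map t defined by t(x) = -x for x < 0, t(x) = x/(2x-1) for 0 < x < 1, t(x) = 2-x for x > 1. -/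
open MeasureTheory

/-- The reflective continued fraction map on the real line. -/
noncomputable def tCF (x : ℝ) : ℝ :=
  if x < 0 then -x else if x < 1 then x / (2 * x - 1) else 2 - x

/-- The invariant density `1/(-x)` on `(-∞,0)`, `1/(x(1-x))` on `(0,1)`,
`1/(x-1)` on `(1,∞)`. -/
noncomputable def fCF (x : ℝ) : ℝ :=
  if x < 0 then 1 / (-x) else if x < 1 then 1 / (x * (1 - x)) else 1 / (x - 1)

noncomputable def muCF : Measure ℝ :=
  volume.withDensity fun x => ENNReal.ofReal (fCF x)


/-! Each of the three pieces `(-∞, 0)`, `(0, 1) \ {1/2}`, `(1, ∞)` is mapped by `t` injectively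
and smoothly onto `(0, ∞)`, `ℝ \ [0, 1]`, `(-∞, 1)` respectively. By the one-dimensional change
of variables, if `f = |t'| · (ψ ∘ t)` on a piece, then `t` pushes `f dx` on that piece forward to
`ψ dy` on its image. For the pieces above `ψ` is `1/y`, `1/(y(y-1))` and `1/(1-y)`, and over each
of the regions `y < 0`, `0 < y < 1`, `y > 1` the two of them that live there add up to `f(y)`:
`f` is a fixed point of the transfer operator of `t`, so `t_* μ = μ`. -/

open Set

theorem map_withDensity_indicator_eq_of_eqOn {t b b' : ℝ → ℝ} {f ψ : ℝ → ENNReal} {E : Set ℝ}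
    (ht : Measurable t) (hE : MeasurableSet E) (htb : EqOn t b E)
    (hb' : ∀ x ∈ E, HasDerivWithinAt b (b' x) E x) (hb : InjOn b E)
    (hf : ∀ x ∈ E, f x = ENNReal.ofReal |b' x| * ψ (b x)) :
    (volume.withDensity (E.indicator f)).map t = volume.withDensity ((b '' E).indicator ψ) := by
  have hbE : MeasurableSet (b '' E) :=
    measurable_image_of_fderivWithin hE (fun x hx => (hb' x hx).hasFDerivWithinAt) hb
  ext A hA
  have hpre : MeasurableSet (E ∩ b ⁻¹' A) := htb.inter_preimage_eq A ▸ hE.inter (ht hA)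
  rw [Measure.map_apply ht hA, withDensity_indicator hE, withDensity_indicator hbE,
    withDensity_apply _ (ht hA), withDensity_apply _ hA, Measure.restrict_restrict (ht hA),
    Measure.restrict_restrict hA, inter_comm, htb.inter_preimage_eq, inter_comm A,
    ← image_inter_preimage, lintegral_image_eq_lintegral_abs_deriv_mul hpre
      (fun x hx => (hb' x hx.1).mono inter_subset_left) (hb.mono inter_subset_left)]
  exact setLIntegral_congr_fun hpre fun x hx => hf x hx.1

noncomputable def mobiusCF (x : ℝ) : ℝ := x / (2 * x - 1)

theorem mobiusCF_mobiusCF {x : ℝ} (hx : 2 * x - 1 ≠ 0) : mobiusCF (mobiusCF x) = x := by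
  have h : 2 * mobiusCF x - 1 = 1 / (2 * x - 1) := by
    unfold mobiusCF
    field_simp
    ring
  rw [mobiusCF, h, div_div_eq_mul_div, div_one, mobiusCF, div_mul_cancel₀ x hx]

theorem hasDerivAt_mobiusCF {x : ℝ} (hx : 2 * x - 1 ≠ 0) :
    HasDerivAt mobiusCF (-1 / (2 * x - 1) ^ 2) x :=
  ((hasDerivAt_id' x).div (((hasDerivAt_id' x).const_mul 2).sub_const 1) hx).congr_deriv (by ring)

theorem mobiusCF_mul_mobiusCF_sub_one {x : ℝ} (hx : 2 * x - 1 ≠ 0) :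
    mobiusCF x * (mobiusCF x - 1) = x * (1 - x) / (2 * x - 1) ^ 2 := by
  rw [mobiusCF, div_sub_one hx, div_mul_div_comm, sq]
  ring

theorem two_mul_sub_one_ne_zero {x : ℝ} (hx : x ≠ 1 / 2) : 2 * x - 1 ≠ 0 := by
  contrapose! hx
  linarith

theorem bijOn_mobiusCF : BijOn mobiusCF (Ioo 0 1 \ {1 / 2}) (Icc 0 1)ᶜ := by
  have hE : ∀ x ∈ Ioo (0 : ℝ) 1 \ {1 / 2}, 2 * x - 1 ≠ 0 := fun x hx =>
    two_mul_sub_one_ne_zero hx.2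
  have hD : ∀ y ∈ (Icc (0 : ℝ) 1)ᶜ, 2 * y - 1 ≠ 0 := fun y hy =>
    two_mul_sub_one_ne_zero fun h => hy ⟨by linarith, by linarith⟩
  refine InvOn.bijOn
    ⟨fun x hx => mobiusCF_mobiusCF (hE x hx), fun y hy => mobiusCF_mobiusCF (hD y hy)⟩ ?_ ?_
  · rintro x ⟨⟨hx0, hx1⟩, hx⟩ ⟨h0, h1⟩
    rcases (hE x ⟨⟨hx0, hx1⟩, hx⟩).lt_or_gt with h | h
    · exact (div_neg_of_pos_of_neg hx0 h).not_ge h0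
    · exact ((one_lt_div h).2 (by linarith)).not_ge h1
  · intro y hy
    have hne : mobiusCF y ≠ 1 / 2 := fun h => by
      rw [mobiusCF, div_eq_iff (hD y hy)] at h
      linarith
    rw [mem_compl_iff, mem_Icc, not_and_or, not_le, not_le] at hy
    rcases hy with hy | hy
    · have h : 2 * y - 1 < 0 := by linarith
      exact ⟨⟨div_pos_of_neg_of_neg hy h, (div_lt_one_of_neg h).2 (by linarith)⟩, hne⟩
    · have h : 0 < 2 * y - 1 := by linarith
      exact ⟨⟨div_pos (by linarith) h, (div_lt_one h).2 (by linarith)⟩, hne⟩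

theorem measurable_tCF : Measurable tCF :=
  measurable_neg.ite measurableSet_Iio
    ((by fun_prop : Measurable fun x : ℝ => x / (2 * x - 1)).ite measurableSet_Iio (by fun_prop))

@[fun_prop]
theorem measurable_fCF : Measurable fCF :=
  (by fun_prop : Measurable fun x : ℝ => 1 / -x).ite measurableSet_Iio
    ((by fun_prop : Measurable fun x : ℝ => 1 / (x * (1 - x))).ite measurableSet_Iio (by fun_prop))

theorem fCF_of_neg {x : ℝ} (hx : x < 0) : fCF x = 1 / -x := by
  simp [fCF, hx]

theorem fCF_of_mem_Ioo {x : ℝ} (hx : x ∈ Ioo 0 1) : fCF x = 1 / (x * (1 - x)) := by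
  simp [fCF, hx.1.not_gt, hx.2]

theorem fCF_of_one_lt {x : ℝ} (hx : 1 < x) : fCF x = 1 / (x - 1) := by
  simp [fCF, (zero_lt_one.trans hx).not_gt, hx.not_gt]

theorem map_tCF_withDensity_Iio :
    (volume.withDensity ((Iio 0).indicator fun x => ENNReal.ofReal (fCF x))).map tCF =
      volume.withDensity ((Ioi 0).indicator fun y => ENNReal.ofReal (1 / y)) := by
  rw [show Ioi (0 : ℝ) = (fun x => -x) '' Iio 0 by simp]
  exact map_withDensity_indicator_eq_of_eqOn (b' := fun _ => -1) measurable_tCF measurableSet_Iio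
    (fun x hx => if_pos hx) (fun x _ => (hasDerivAt_neg x).hasDerivWithinAt) neg_injective.injOn
    (fun x hx => by simp [fCF_of_neg hx])

theorem map_tCF_withDensity_Ioo :
    (volume.withDensity ((Ioo 0 1 \ {1 / 2}).indicator fun x => ENNReal.ofReal (fCF x))).map tCF =
      volume.withDensity ((Icc 0 1)ᶜ.indicator fun y => ENNReal.ofReal (1 / (y * (y - 1)))) := by
  rw [← bijOn_mobiusCF.image_eq]
  refine map_withDensity_indicator_eq_of_eqOn measurable_tCF
    (measurableSet_Ioo.diff (measurableSet_singleton _))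
    (fun x hx => by simp [tCF, hx.1.1.not_gt, hx.1.2, mobiusCF])
    (fun x hx => (hasDerivAt_mobiusCF (two_mul_sub_one_ne_zero hx.2)).hasDerivWithinAt)
    bijOn_mobiusCF.injOn fun x hx => ?_
  have h2 := two_mul_sub_one_ne_zero hx.2
  rw [fCF_of_mem_Ioo hx.1, ← ENNReal.ofReal_mul (abs_nonneg _), neg_div, abs_neg,
    abs_of_nonneg (by positivity), mobiusCF_mul_mobiusCF_sub_one h2, one_div_div,
    one_div_mul_eq_div, div_div_cancel_left' (pow_ne_zero 2 h2), one_div]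

theorem map_tCF_withDensity_Ioi :
    (volume.withDensity ((Ioi 1).indicator fun x => ENNReal.ofReal (fCF x))).map tCF =
      volume.withDensity ((Iio 1).indicator fun y => ENNReal.ofReal (1 / (1 - y))) := by
  rw [show Iio (1 : ℝ) = (fun x => 2 - x) '' Ioi 1 by norm_num]
  exact map_withDensity_indicator_eq_of_eqOn (b' := fun _ => -1) measurable_tCF measurableSet_Ioi
    (fun x (hx : 1 < x) => by simp [tCF, (zero_lt_one.trans hx).not_gt, hx.not_gt])
    (fun x _ => ((hasDerivAt_id x).const_sub 2).hasDerivWithinAt) sub_right_injective.injOn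
    (fun x hx => by simp [fCF_of_one_lt hx, show 1 - (2 - x) = x - 1 by ring])

theorem ae_ne_zero_half_one : ∀ᵐ x : ℝ, x ≠ 0 ∧ x ≠ 1 / 2 ∧ x ≠ 1 := by
  filter_upwards [(toFinite ({0, 1 / 2, 1} : Set ℝ)).countable.ae_notMem volume] with x hx
  simpa [not_or] using hx

theorem ae_eq_sum_indicator_fCF :
    (fun x => ENNReal.ofReal (fCF x)) =ᵐ[volume]
      (Iio 0).indicator (fun x => ENNReal.ofReal (fCF x)) +
        (Ioo 0 1 \ {1 / 2}).indicator (fun x => ENNReal.ofReal (fCF x)) +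
          (Ioi 1).indicator (fun x => ENNReal.ofReal (fCF x)) := by
  filter_upwards [ae_ne_zero_half_one] with x ⟨h0, h12, h1⟩
  rcases h0.lt_or_gt with hx0 | hx0
  · simp [indicator, hx0, hx0.not_gt, (hx0.trans one_pos).not_gt]
  rcases h1.lt_or_gt with hx1 | hx1
  · simp_all [indicator, hx0.not_gt, hx1.not_gt]
  · simp [indicator, hx1, (zero_lt_one.trans hx1).not_gt, hx1.not_gt]

theorem sum_indicator_ae_eq_fCF :
    (Ioi 0).indicator (fun y => ENNReal.ofReal (1 / y)) +
        (Icc 0 1)ᶜ.indicator (fun y => ENNReal.ofReal (1 / (y * (y - 1)))) +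
          (Iio 1).indicator (fun y => ENNReal.ofReal (1 / (1 - y))) =ᵐ[volume]
      fun x => ENNReal.ofReal (fCF x) := by
  filter_upwards [ae_ne_zero_half_one] with x ⟨h0, _, h1⟩
  simp only [Pi.add_apply]
  rcases h0.lt_or_gt with hx0 | hx0
  · have hx1 : x < 1 := hx0.trans one_pos
    rw [indicator_of_notMem (notMem_Ioi.2 hx0.le),
      indicator_of_mem (show x ∈ (Icc 0 1)ᶜ from fun h => hx0.not_ge h.1),
      indicator_of_mem (mem_Iio.2 hx1), zero_add,
      ← ENNReal.ofReal_add (one_div_nonneg.2 (mul_nonneg_of_nonpos_of_nonpos hx0.le (by linarith)))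
        (one_div_nonneg.2 (by linarith)), fCF_of_neg hx0]
    congr 1
    field_simp
    ring
  rcases h1.lt_or_gt with hx1 | hx1
  · rw [indicator_of_mem (mem_Ioi.2 hx0), indicator_of_notMem (not_not.2 ⟨hx0.le, hx1.le⟩),
      indicator_of_mem (mem_Iio.2 hx1), add_zero,
      ← ENNReal.ofReal_add (by positivity) (one_div_nonneg.2 (by linarith)),
      fCF_of_mem_Ioo ⟨hx0, hx1⟩]
    congr 1
    field_simp
    ring
  · rw [indicator_of_mem (mem_Ioi.2 hx0),
      indicator_of_mem (show x ∈ (Icc 0 1)ᶜ from fun h => hx1.not_ge h.2),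
      indicator_of_notMem (notMem_Iio.2 hx1.le), add_zero,
      ← ENNReal.ofReal_add (by positivity) (one_div_nonneg.2 (mul_nonneg hx0.le (by linarith))),
      fCF_of_one_lt hx1]
    congr 1
    field_simp
    ring

theorem map_tCF_muCF : muCF.map tCF = muCF := by
  conv_lhs =>
    rw [muCF, withDensity_congr_ae ae_eq_sum_indicator_fCF,
      withDensity_add_left (by fun_prop (disch := measurability)),
      withDensity_add_left (by fun_prop (disch := measurability)),
      Measure.map_add _ _ measurable_tCF, Measure.map_add _ _ measurable_tCF,
      map_tCF_withDensity_Iio, map_tCF_withDensity_Ioo, map_tCF_withDensity_Ioi,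
      ← withDensity_add_left (by fun_prop (disch := measurability)),
      ← withDensity_add_left (by fun_prop (disch := measurability))]
  exact withDensity_congr_ae sum_indicator_ae_eq_fCF

theorem reflective_cf_invariant_measure (A : Set ℝ) (hA : MeasurableSet A) :
    muCF (tCF ⁻¹' A) = muCF A := by
  rw [← Measure.map_apply measurable_tCF hA, map_tCF_muCF]
end

section
/- The hyperbolic area (with respect to the measure dx·dy/y^2 on the upper half-plane) of the vertical translate by α > 0 of the ideal triangle with vertices 0, 1, ∞ equals J(α) = ∫_0^1 dx/(α + √(x(1-x))) = π − 2·arccos(1/(2α))/√(1 − 1/(4α^2)) for α > 1/2. -/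
/-!
Integrating `dy / y²` along each vertical fibre `y ≥ α + √(x(1-x))` leaves
`1 / (α + √(x(1-x)))`, which gives `J(α)`. The substitution `x = (1 + sin t) / 2` turns
`√(x(1-x))` into `cos t / 2`, so `J(α) = ∫_{-π/2}^{π/2} (1 - 2α / (2α + cos t)) dt`, and the
half-angle substitution `u = tan (t/2)` evaluates the remaining integral in terms of
`arctan √((2α-1)/(2α+1)) = arccos (1/(2α)) / 2`.
-/

open MeasureTheory Real Set

lemma one_div_sq_eq_rpow_neg_two {y : ℝ} (hy : 0 < y) : 1 / y ^ 2 = y ^ (-2 : ℝ) := by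
  rw [rpow_neg hy.le, one_div]
  norm_cast

lemma integrableOn_Ici_one_div_sq {c : ℝ} (hc : 0 < c) :
    IntegrableOn (fun y : ℝ => 1 / y ^ 2) (Ici c) := by
  rw [integrableOn_Ici_iff_integrableOn_Ioi]
  exact (integrableOn_Ioi_rpow_of_lt (by norm_num) hc).congr_fun
    (fun y hy => (one_div_sq_eq_rpow_neg_two (hc.trans hy)).symm) measurableSet_Ioi

lemma integral_Ici_one_div_sq {c : ℝ} (hc : 0 < c) : ∫ y in Ici c, 1 / y ^ 2 = 1 / c := by
  rw [integral_Ici_eq_integral_Ioi, setIntegral_congr_fun measurableSet_Ioi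
    (fun y hy => one_div_sq_eq_rpow_neg_two (hc.trans hy)),
    integral_Ioi_rpow_of_lt (by norm_num) hc]
  norm_num [rpow_neg_one]

section RegionAbove

def regionAbove (a b : ℝ) (c : ℝ → ℝ) : Set (ℝ × ℝ) :=
  {p | a ≤ p.1 ∧ p.1 ≤ b ∧ c p.1 ≤ p.2}

variable {a b : ℝ} {c : ℝ → ℝ}

lemma indicator_regionAbove_apply (x y : ℝ) :
    (regionAbove a b c).indicator (fun p => 1 / p.2 ^ 2) (x, y) =
      (Icc a b).indicator (fun x => (Ici (c x)).indicator (fun y => 1 / y ^ 2) y) x := by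
  by_cases hx : x ∈ Icc a b
  · rw [indicator_of_mem hx]
    by_cases hy : y ∈ Ici (c x)
    · have hxy : (x, y) ∈ regionAbove a b c := ⟨hx.1, hx.2, hy⟩
      rw [indicator_of_mem hy, indicator_of_mem hxy]
    · rw [indicator_of_notMem hy, indicator_of_notMem fun h => hy h.2.2]
  · rw [indicator_of_notMem hx, indicator_of_notMem fun h => hx ⟨h.1, h.2.1⟩]

lemma integrable_indicator_regionAbove_slice (hc : ∀ x ∈ Icc a b, 0 < c x) (x : ℝ) :
    Integrable fun y => (regionAbove a b c).indicator (fun p => 1 / p.2 ^ 2) (x, y) := by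
  simp_rw [indicator_regionAbove_apply]
  by_cases hx : x ∈ Icc a b
  · simpa only [indicator_of_mem hx, integrable_indicator_iff measurableSet_Ici]
      using integrableOn_Ici_one_div_sq (hc x hx)
  · simp only [indicator_of_notMem hx]
    exact integrable_zero _ _ _

lemma integral_indicator_regionAbove_slice (hc : ∀ x ∈ Icc a b, 0 < c x) (x : ℝ) :
    ∫ y, (regionAbove a b c).indicator (fun p => 1 / p.2 ^ 2) (x, y) =
      (Icc a b).indicator (fun x => 1 / c x) x := by
  simp_rw [indicator_regionAbove_apply]
  by_cases hx : x ∈ Icc a b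
  · simp only [indicator_of_mem hx]
    rw [integral_indicator measurableSet_Ici, integral_Ici_one_div_sq (hc x hx)]
  · simp only [indicator_of_notMem hx, integral_zero]

theorem setIntegral_regionAbove_one_div_sq (hc_meas : Measurable c)
    (hc : ∀ x ∈ Icc a b, 0 < c x) (hc_int : IntegrableOn (fun x => 1 / c x) (Icc a b)) :
    ∫ p in regionAbove a b c, 1 / p.2 ^ 2 = ∫ x in Icc a b, 1 / c x := by
  have hS : MeasurableSet (regionAbove a b c) :=
    (measurableSet_le measurable_const measurable_fst).inter
      ((measurableSet_le measurable_fst measurable_const).inter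
        (measurableSet_le (hc_meas.comp measurable_fst) measurable_snd))
  have hnorm (p : ℝ × ℝ) : ‖(regionAbove a b c).indicator (fun p => 1 / p.2 ^ 2) p‖ =
      (regionAbove a b c).indicator (fun p => 1 / p.2 ^ 2) p :=
    norm_of_nonneg (indicator_nonneg (fun p _ => by positivity) p)
  have hint :
      Integrable ((regionAbove a b c).indicator fun p => 1 / p.2 ^ 2) (volume.prod volume) := by
    refine (integrable_prod_iff ?_).2
      ⟨.of_forall (integrable_indicator_regionAbove_slice hc), ?_⟩
    · exact ((measurable_snd.pow_const 2).const_div 1 |>.indicator hS).aestronglyMeasurable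
    · simp_rw [hnorm, integral_indicator_regionAbove_slice hc]
      exact (integrable_indicator_iff measurableSet_Icc).2 hc_int
  rw [← integral_indicator hS, Measure.volume_eq_prod, integral_prod _ hint]
  simp_rw [integral_indicator_regionAbove_slice hc]
  exact integral_indicator measurableSet_Icc

end RegionAbove

lemma cos_ne_neg_one_of_cos_half_ne_zero {t : ℝ} (ht : cos (t / 2) ≠ 0) : cos t ≠ -1 := by
  have h := cos_sq (t / 2)
  rw [show 2 * (t / 2) = t by ring] at h
  intro h'
  exact ht (pow_eq_zero_iff two_ne_zero |>.1 (by rw [h, h']; ring))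

lemma hasDerivAt_arctan_mul_tan_half {a t : ℝ} (ha : 1 < a) (ht : cos (t / 2) ≠ 0) :
    HasDerivAt (fun t => 2 / √(a ^ 2 - 1) * arctan (√((a - 1) / (a + 1)) * tan (t / 2)))
      (1 / (a + cos t)) t := by
  set c := √((a - 1) / (a + 1))
  have hc : 0 < c := sqrt_pos.2 (div_pos (by linarith) (by linarith))
  have hc_sq : c ^ 2 = (a - 1) / (a + 1) := sq_sqrt (div_pos (by linarith) (by linarith)).le
  have hs : √(a ^ 2 - 1) = c * (a + 1) := by
    rw [← sqrt_sq (by positivity : 0 ≤ c * (a + 1)), mul_pow, hc_sq]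
    congr 1; field_simp; ring
  have hT : HasDerivAt (fun t => tan (t / 2)) (1 / cos (t / 2) ^ 2 * (1 / 2)) t :=
    HasDerivAt.comp (h₂ := tan) t (hasDerivAt_tan ht) ((hasDerivAt_id t).div_const 2)
  refine (((hasDerivAt_arctan _).comp t (hT.const_mul c)).const_mul _).congr_deriv ?_
  rw [one_div (cos _ ^ 2), ← inv_one_add_tan_sq ht, inv_inv, hs,
    cos_eq_two_mul_tan_half_div_one_sub_tan_half_sq t (cos_ne_neg_one_of_cos_half_ne_zero ht)]
  have hden : 0 < a * (1 + tan (t / 2) ^ 2) + (1 - tan (t / 2) ^ 2) := by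
    nlinarith [sq_nonneg (tan (t / 2))]
  field_simp
  rw [hc_sq]
  field_simp
  ring

lemma arccos_eq_two_mul_arctan_sqrt {u : ℝ} (h₁ : -1 < u) (h₂ : u ≤ 1) :
    arccos u = 2 * arctan √((1 - u) / (1 + u)) := by
  set θ := arccos u
  have hθ₀ : 0 ≤ θ := arccos_nonneg u
  have hθπ : θ < π := arccos_lt_pi.2 h₁
  have hcos : cos (θ / 2) ≠ 0 := (cos_pos_of_mem_Ioo ⟨by linarith, by linarith⟩).ne'
  have htan : 0 ≤ tan (θ / 2) := tan_nonneg_of_nonneg_of_le_pi_div_two (by linarith) (by linarith)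
  have hu : u = (1 - tan (θ / 2) ^ 2) / (1 + tan (θ / 2) ^ 2) := by
    rw [← cos_eq_two_mul_tan_half_div_one_sub_tan_half_sq θ
      (cos_ne_neg_one_of_cos_half_ne_zero hcos), cos_arccos h₁.le h₂]
  have hsqrt : √((1 - u) / (1 + u)) = tan (θ / 2) := by
    have h : (1 - u) / (1 + u) = tan (θ / 2) ^ 2 := by rw [hu]; field_simp; ring
    rw [h, sqrt_sq htan]
  rw [hsqrt, arctan_tan (by linarith) (by linarith)]
  ring

lemma integral_one_div_add_cos {a : ℝ} (ha : 1 < a) :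
    ∫ t in -(π / 2)..π / 2, 1 / (a + cos t) = 2 * arccos (1 / a) / √(a ^ 2 - 1) := by
  have hcont : Continuous fun t => 1 / (a + cos t) :=
    continuous_const.div (by fun_prop) fun t => by nlinarith [neg_one_le_cos t]
  rw [intervalIntegral.integral_eq_sub_of_hasDerivAt
    (fun t ht => hasDerivAt_arctan_mul_tan_half ha ?_) (hcont.intervalIntegrable _ _)]
  · have hu : (1 - 1 / a) / (1 + 1 / a) = (a - 1) / (a + 1) := by field_simp
    rw [arccos_eq_two_mul_arctan_sqrt (by linarith [one_div_pos.2 (zero_lt_one.trans ha)])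
      ((div_le_one (by linarith)).2 ha.le), hu, neg_div, tan_neg,
      show π / 2 / 2 = π / 4 by ring, tan_pi_div_four, mul_neg, mul_one, arctan_neg]
    ring
  · rw [uIcc_of_le (by linarith [pi_pos])] at ht
    exact (cos_pos_of_mem_Ioo ⟨by linarith [pi_pos, ht.1], by linarith [pi_pos, ht.2]⟩).ne'

lemma integral_unitInterval_eq_integral_sin_subst {g : ℝ → ℝ}
    (hg : ContinuousOn g (Icc 0 1)) :
    ∫ x in (0 : ℝ)..1, g x = ∫ t in -(π / 2)..π / 2, g ((1 + sin t) / 2) * (cos t / 2) := by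
  have hmaps : (fun t => (1 + sin t) / 2) '' uIcc (-(π / 2)) (π / 2) ⊆ Icc 0 1 := by
    rintro _ ⟨t, -, rfl⟩
    constructor <;> linarith [neg_one_le_sin t, sin_le_one t]
  have h := intervalIntegral.integral_comp_mul_deriv' (f := fun t => (1 + sin t) / 2)
    (fun t _ => ((hasDerivAt_sin t).const_add 1).div_const 2) (by fun_prop) (hg.mono hmaps)
  norm_num at h
  exact h.symm

lemma one_div_add_sqrt_sin_subst {α t : ℝ} (hα : 0 < α) (ht : t ∈ Icc (-(π / 2)) (π / 2)) :
    1 / (α + √((1 + sin t) / 2 * (1 - (1 + sin t) / 2))) * (cos t / 2) =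
      1 - 2 * α * (1 / (2 * α + cos t)) := by
  have hcos : 0 ≤ cos t := cos_nonneg_of_mem_Icc ht
  have hsq : (1 + sin t) / 2 * (1 - (1 + sin t) / 2) = (cos t / 2) ^ 2 := by
    nlinarith [sin_sq_add_cos_sq t]
  rw [hsq, sqrt_sq (by positivity)]
  field_simp
  ring

lemma integral_one_div_add_sqrt_mul_one_sub {α : ℝ} (hα : 1 / 2 < α) :
    ∫ x in (0 : ℝ)..1, 1 / (α + √(x * (1 - x))) =
      π - 2 * arccos (1 / (2 * α)) / √(1 - 1 / (4 * α ^ 2)) := by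
  have hα₀ : 0 < α := by linarith
  have hcont : Continuous fun t => 1 / (2 * α + cos t) :=
    continuous_const.div (by fun_prop) fun t => by nlinarith [neg_one_le_cos t]
  have hg : Continuous fun x => 1 / (α + √(x * (1 - x))) :=
    continuous_const.div (by fun_prop) fun x => by positivity
  rw [integral_unitInterval_eq_integral_sin_subst hg.continuousOn,
    intervalIntegral.integral_congr fun t ht => one_div_add_sqrt_sin_subst hα₀
      (by rwa [uIcc_of_le (by linarith [pi_pos])] at ht),
    intervalIntegral.integral_sub intervalIntegrable_const
      ((hcont.intervalIntegrable _ _).const_mul _),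
    intervalIntegral.integral_const_mul, integral_one_div_add_cos (by linarith)]
  have hs : √(1 - 1 / (4 * α ^ 2)) = √((2 * α) ^ 2 - 1) / (2 * α) := by
    rw [show 1 - 1 / (4 * α ^ 2) = ((2 * α) ^ 2 - 1) / (2 * α) ^ 2 by field_simp; ring,
      sqrt_div' _ (by positivity), sqrt_sq (by positivity)]
  have hpos : 0 < √((2 * α) ^ 2 - 1) := sqrt_pos.2 (by nlinarith)
  rw [hs, intervalIntegral.integral_const, smul_eq_mul, mul_one]
  field_simp
  ring

theorem hyperbolic_area_translated_ideal_triangle (α : ℝ) (hα : 1 / 2 < α) :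
    ((∫ p in {p : ℝ × ℝ | 0 ≤ p.1 ∧ p.1 ≤ 1 ∧ α + Real.sqrt (p.1 * (1 - p.1)) ≤ p.2},
        1 / p.2 ^ 2) = ∫ x in (0:ℝ)..1, 1 / (α + Real.sqrt (x * (1 - x)))) ∧
    ((∫ x in (0:ℝ)..1, 1 / (α + Real.sqrt (x * (1 - x)))) =
      π - 2 * Real.arccos (1 / (2 * α)) / Real.sqrt (1 - 1 / (4 * α ^ 2))) := by
  have hpos (x : ℝ) : 0 < α + √(x * (1 - x)) := by positivity
  have hcont : Continuous fun x : ℝ => α + √(x * (1 - x)) := by fun_prop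
  refine ⟨?_, integral_one_div_add_sqrt_mul_one_sub hα⟩
  rw [intervalIntegral.integral_of_le zero_le_one, ← integral_Icc_eq_integral_Ioc]
  exact setIntegral_regionAbove_one_div_sq hcont.measurable (fun x _ => hpos x)
    ((continuous_const.div hcont fun x => (hpos x).ne').integrableOn_Icc)
end

section
/- The hyperbolic area of a Euclidean disk of radius r in the upper half-plane whose center has y-coordinate b > r equals I(α) = 2π(α/√(α²−1) − 1) where α = b/r. -/
open MeasureTheory Real

/-! Slicing horizontally, the chord of the disk at height `y` has length `2√(r² - (y - b)²)`,
so the area is `2 ∫_{b-r}^{b+r} √(r² - (y - b)²) / y² dy`. This integrand has the elementary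
antiderivative `chordAntideriv`, whose two arcsine terms both run from `-π/2` to `π/2` across
the interval, giving `π (b / √(b² - r²) - 1)`. -/

theorem setIntegral_comp_snd_eq_integral_measureReal_slice {α β : Type*} [MeasurableSpace α]
    [MeasurableSpace β] {μ : Measure α} {ν : Measure β} [SFinite μ] [SFinite ν]
    {S : Set (α × β)} (hS : MeasurableSet S) {f : β → ℝ}
    (hf : IntegrableOn (fun p => f p.2) S (μ.prod ν)) :
    ∫ p in S, f p.2 ∂μ.prod ν = ∫ y, μ.real {x | (x, y) ∈ S} * f y ∂ν := by
  rw [← integral_indicator hS, integral_prod_symm _ ((integrable_indicator_iff hS).2 hf)]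
  congr 1 with y
  have hslice : MeasurableSet {x | (x, y) ∈ S} := measurable_prodMk_right hS
  rw [← smul_eq_mul, ← setIntegral_const, ← integral_indicator hslice]
  rfl

theorem volume_real_setOf_sq_le (a : ℝ) : volume.real {x : ℝ | x ^ 2 ≤ a} = 2 * √a := by
  rcases le_or_gt 0 a with ha | ha
  · have : {x : ℝ | x ^ 2 ≤ a} = Set.Icc (-√a) √a := by ext x; exact Real.sq_le ha
    rw [this, Real.volume_real_Icc_of_le (by linarith [Real.sqrt_nonneg a])]
    ring
  · have : {x : ℝ | x ^ 2 ≤ a} = ∅ :=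
      Set.eq_empty_of_forall_notMem fun x (hx : x ^ 2 ≤ a) => by nlinarith [sq_nonneg x]
    simp [this, Real.sqrt_eq_zero_of_nonpos ha.le]

section ChordIntegral

variable {b r y : ℝ}

theorem hasDerivAt_neg_sqrt_chord_div (hy : y ≠ 0) (hs : 0 < r ^ 2 - (y - b) ^ 2) :
    HasDerivAt (fun t => -(√(r ^ 2 - (t - b) ^ 2) / t))
      ((b * (y - b) + r ^ 2) / (√(r ^ 2 - (y - b) ^ 2) * y ^ 2)) y := by
  have hpoly : HasDerivAt (fun t => r ^ 2 - (t - b) ^ 2) (-(2 * (y - b))) y := by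
    simpa using (((hasDerivAt_id y).sub_const b).pow 2).const_sub (r ^ 2)
  refine ((hpoly.sqrt hs.ne').div (hasDerivAt_id y) hy).neg.congr_deriv ?_
  have hs0 : √(r ^ 2 - (y - b) ^ 2) ≠ 0 := (Real.sqrt_pos.2 hs).ne'
  simp only [id]
  field_simp
  linear_combination Real.sq_sqrt hs.le

theorem hasDerivAt_arcsin_sub_div (hr : 0 < r) (hs : 0 < r ^ 2 - (y - b) ^ 2) :
    HasDerivAt (fun t => arcsin ((t - b) / r)) (1 / √(r ^ 2 - (y - b) ^ 2)) y := by
  have hlt : ((y - b) / r) ^ 2 < 1 := by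
    rw [div_pow, div_lt_one (by positivity)]; linarith
  have hinner : HasDerivAt (fun t => (t - b) / r) (1 / r) y := by
    simpa using ((hasDerivAt_id y).sub_const b).div_const r
  refine ((Real.hasDerivAt_arcsin (by nlinarith) (by nlinarith)).comp y hinner).congr_deriv ?_
  have hsqrt : √(1 - ((y - b) / r) ^ 2) = √(r ^ 2 - (y - b) ^ 2) / r := by
    rw [show 1 - ((y - b) / r) ^ 2 = (r ^ 2 - (y - b) ^ 2) / r ^ 2 by field_simp,
      Real.sqrt_div' _ (sq_nonneg r), Real.sqrt_sq hr.le]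
  have hs0 : √(r ^ 2 - (y - b) ^ 2) ≠ 0 := (Real.sqrt_pos.2 hs).ne'
  rw [hsqrt]
  field_simp

theorem hasDerivAt_arcsin_linear_fractional (hr : 0 < r) (hbr : r < b)
    (hs : 0 < r ^ 2 - (y - b) ^ 2) :
    HasDerivAt (fun t => arcsin ((b * (t - b) + r ^ 2) / (r * t)))
      (√(b ^ 2 - r ^ 2) / (√(r ^ 2 - (y - b) ^ 2) * y)) y := by
  have hy : 0 < y := by nlinarith
  set q := (b * (y - b) + r ^ 2) / (r * y)
  have hq : 1 - q ^ 2 = (b ^ 2 - r ^ 2) * (r ^ 2 - (y - b) ^ 2) / (r * y) ^ 2 := by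
    simp only [q]; field_simp; ring
  have hd : 0 < b ^ 2 - r ^ 2 := by nlinarith
  have hq_pos : 0 < 1 - q ^ 2 := by rw [hq]; positivity
  have hinner : HasDerivAt (fun t => (b * (t - b) + r ^ 2) / (r * t))
      ((b * (r * y) - (b * (y - b) + r ^ 2) * r) / (r * y) ^ 2) y := by
    have hnum : HasDerivAt (fun t => b * (t - b) + r ^ 2) b y := by
      simpa using (((hasDerivAt_id y).sub_const b).const_mul b).add_const (r ^ 2)
    exact hnum.div (by simpa using (hasDerivAt_id y).const_mul r) (by positivity)
  refine ((Real.hasDerivAt_arcsin (by nlinarith) (by nlinarith)).comp y hinner).congr_deriv ?_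
  have hsqrt : √(1 - q ^ 2) = √(b ^ 2 - r ^ 2) * √(r ^ 2 - (y - b) ^ 2) / (r * y) := by
    rw [hq, Real.sqrt_div' _ (sq_nonneg _), Real.sqrt_sq (by positivity), Real.sqrt_mul' _ hs.le]
  have hs0 : √(r ^ 2 - (y - b) ^ 2) ≠ 0 := (Real.sqrt_pos.2 hs).ne'
  have hd0 : √(b ^ 2 - r ^ 2) ≠ 0 := (Real.sqrt_pos.2 hd).ne'
  rw [hsqrt]
  field_simp
  linear_combination -Real.sq_sqrt hd.le

noncomputable def chordAntideriv (b r y : ℝ) : ℝ :=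
  -(√(r ^ 2 - (y - b) ^ 2) / y) - arcsin ((y - b) / r)
    + b / √(b ^ 2 - r ^ 2) * arcsin ((b * (y - b) + r ^ 2) / (r * y))

theorem hasDerivAt_chordAntideriv (hr : 0 < r) (hbr : r < b) (hs : 0 < r ^ 2 - (y - b) ^ 2) :
    HasDerivAt (chordAntideriv b r) (√(r ^ 2 - (y - b) ^ 2) / y ^ 2) y := by
  have hy : 0 < y := by nlinarith
  have hd0 : √(b ^ 2 - r ^ 2) ≠ 0 := (Real.sqrt_pos.2 (by nlinarith)).ne'
  have hs0 : √(r ^ 2 - (y - b) ^ 2) ≠ 0 := (Real.sqrt_pos.2 hs).ne'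
  have h := ((hasDerivAt_neg_sqrt_chord_div hy.ne' hs).sub (hasDerivAt_arcsin_sub_div hr hs)).add
    ((hasDerivAt_arcsin_linear_fractional hr hbr hs).const_mul (b / √(b ^ 2 - r ^ 2)))
  refine h.congr_deriv ?_
  field_simp
  linear_combination -Real.sq_sqrt hs.le

theorem continuousOn_chordAntideriv (hr : 0 < r) (hbr : r < b) :
    ContinuousOn (chordAntideriv b r) (Set.Icc (b - r) (b + r)) := by
  have hy : ∀ y ∈ Set.Icc (b - r) (b + r), y ≠ 0 := fun y hy => by linarith [hy.1]
  unfold chordAntideriv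
  refine ContinuousOn.add ?_ (continuousOn_const.mul (continuous_arcsin.comp_continuousOn
    (ContinuousOn.div (by fun_prop) (by fun_prop) fun y hy' => mul_ne_zero hr.ne' (hy y hy'))))
  exact ((ContinuousOn.div (by fun_prop) continuousOn_id hy).neg).sub (by fun_prop)

theorem chordAntideriv_sub (hr : 0 < r) (hbr : r < b) :
    chordAntideriv b r (b + r) - chordAntideriv b r (b - r) =
      π * (b / √(b ^ 2 - r ^ 2) - 1) := by
  have hq_top : (b * (b + r - b) + r ^ 2) / (r * (b + r)) = 1 := by
    rw [div_eq_one_iff_eq (by nlinarith)]; ring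
  have hq_bot : (b * (b - r - b) + r ^ 2) / (r * (b - r)) = -1 := by
    rw [div_eq_iff (by nlinarith)]; ring
  have h_top : (b + r - b) / r = 1 := by rw [add_sub_cancel_left, div_self hr.ne']
  have h_bot : (b - r - b) / r = -1 := by rw [sub_sub_cancel_left, neg_div, div_self hr.ne']
  have hs_top : r ^ 2 - (b + r - b) ^ 2 = 0 := by ring
  have hs_bot : r ^ 2 - (b - r - b) ^ 2 = 0 := by ring
  simp only [chordAntideriv, hq_top, hq_bot, h_top, h_bot, hs_top, hs_bot, Real.sqrt_zero, zero_div,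
    arcsin_one, arcsin_neg_one]
  ring

theorem integral_sqrt_chord_div_sq (hr : 0 < r) (hbr : r < b) :
    ∫ y in (b - r)..(b + r), √(r ^ 2 - (y - b) ^ 2) / y ^ 2 =
      π * (b / √(b ^ 2 - r ^ 2) - 1) := by
  have hle : b - r ≤ b + r := by linarith
  have hint :
      IntervalIntegrable (fun y => √(r ^ 2 - (y - b) ^ 2) / y ^ 2) volume (b - r) (b + r) :=
    ContinuousOn.intervalIntegrable <| ContinuousOn.div (by fun_prop) (by fun_prop)
      fun y hy => pow_ne_zero 2 (by linarith [(Set.uIcc_of_le hle ▸ hy).1])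
  rw [intervalIntegral.integral_eq_sub_of_hasDerivAt_of_le hle (continuousOn_chordAntideriv hr hbr)
    (fun y hy => hasDerivAt_chordAntideriv hr hbr (by nlinarith [hy.1, hy.2])) hint,
    chordAntideriv_sub hr hbr]

theorem sqrt_chord_eq_zero_of_notMem_Ioc (hr : 0 ≤ r) (hy : y ∉ Set.Ioc (b - r) (b + r)) :
    √(r ^ 2 - (y - b) ^ 2) = 0 := by
  refine Real.sqrt_eq_zero_of_nonpos ?_
  rw [Set.mem_Ioc, not_and_or, not_lt, not_le] at hy
  rcases hy with hy | hy <;> nlinarith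

end ChordIntegral

theorem div_sqrt_div_sq_sub_one {r : ℝ} (b : ℝ) (hr : 0 < r) :
    b / r / √((b / r) ^ 2 - 1) = b / √(b ^ 2 - r ^ 2) := by
  rw [show (b / r) ^ 2 - 1 = (b ^ 2 - r ^ 2) / r ^ 2 by field_simp,
    Real.sqrt_div' _ (sq_nonneg r), Real.sqrt_sq hr.le, div_div_div_cancel_right₀ hr.ne']

theorem disk_subset_Icc_prod {b r : ℝ} (hr : 0 ≤ r) :
    {p : ℝ × ℝ | p.1 ^ 2 + (p.2 - b) ^ 2 ≤ r ^ 2} ⊆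
      Set.Icc (-r) r ×ˢ Set.Icc (b - r) (b + r) := by
  rintro ⟨x, y⟩ hp
  rw [Set.mem_ofPred_eq] at hp
  obtain ⟨hx₁, hx₂⟩ := abs_le_of_sq_le_sq' (a := x) (by nlinarith [sq_nonneg (y - b)]) hr
  obtain ⟨hy₁, hy₂⟩ := abs_le_of_sq_le_sq' (a := y - b) (by nlinarith [sq_nonneg x]) hr
  exact ⟨⟨hx₁, hx₂⟩, ⟨by linarith, by linarith⟩⟩

theorem hyperbolic_area_euclidean_disk (b r : ℝ) (hr : 0 < r) (hbr : r < b) :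
    (∫ p in {p : ℝ × ℝ | p.1 ^ 2 + (p.2 - b) ^ 2 ≤ r ^ 2}, 1 / p.2 ^ 2) =
      2 * π * ((b / r) / Real.sqrt ((b / r) ^ 2 - 1) - 1) := by
  set D := {p : ℝ × ℝ | p.1 ^ 2 + (p.2 - b) ^ 2 ≤ r ^ 2}
  have hD_closed : IsClosed D := isClosed_le (by fun_prop) continuous_const
  have hD_compact : IsCompact D :=
    (isCompact_Icc.prod isCompact_Icc).of_isClosed_subset hD_closed (disk_subset_Icc_prod hr.le)
  have hD_pos : ∀ p ∈ D, 0 < p.2 := fun p hp => by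
    linarith [(disk_subset_Icc_prod hr.le hp).2.1]
  have hint : IntegrableOn (fun p : ℝ × ℝ => 1 / p.2 ^ 2) D :=
    (continuousOn_const.div (by fun_prop) fun p hp => pow_ne_zero 2 (hD_pos p hp).ne')
      |>.integrableOn_compact hD_compact
  have hslice (y : ℝ) : {x | (x, y) ∈ D} = {x | x ^ 2 ≤ r ^ 2 - (y - b) ^ 2} := by
    ext; simp only [D, Set.mem_ofPred_eq, le_sub_iff_add_le]
  calc (∫ p in D, 1 / p.2 ^ 2)
      = ∫ y, volume.real {x | (x, y) ∈ D} * (1 / y ^ 2) :=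
        setIntegral_comp_snd_eq_integral_measureReal_slice (f := fun y => 1 / y ^ 2)
          hD_closed.measurableSet hint
    _ = 2 * ∫ y in (b - r)..(b + r), √(r ^ 2 - (y - b) ^ 2) / y ^ 2 := by
        simp only [hslice, volume_real_setOf_sq_le, mul_one_div, mul_div_assoc]
        rw [integral_const_mul, intervalIntegral.integral_of_le (by linarith),
          setIntegral_eq_integral_of_forall_compl_eq_zero fun y hy => by
            rw [sqrt_chord_eq_zero_of_notMem_Ioc hr.le hy, zero_div]]
    _ = 2 * π * ((b / r) / √((b / r) ^ 2 - 1) - 1) := by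
        rw [integral_sqrt_chord_div_sq hr hbr, div_sqrt_div_sq_sub_one b hr, mul_assoc]
end
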